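/- Let S be a left cancellative monoid, R a ring with an S-grading of support size d, and suppose the neutral element e is not in the support. Then for every g in the support, (R_g)^{d+1} = 0. -/

import Mathlib

/-- Product `a * l₀ * l₁ * ⋯` of a nonempty list of ring elements. -/
def mulList {R : Type*} [Mul R] (a : R) (l : List R) : R := l.foldl (· * ·) a

/-- `pw a n` is `aⁿ` for `n ≥ 1` (junk value `0` at `n = 0`). -/
def pw {R : Type*} [Mul R] [Zero R] (a : R) : ℕ → R
  | 0 => 0
  | 1 => a
  | n + 2 => pw a (n + 1) * a

/-- Product of `n` elements given by `f` (junk `0` when `n = 0`). -/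
def finProd {R : Type*} [Mul R] [Zero R] : {n : ℕ} → (Fin n → R) → R
  | 0, _ => 0
  | n + 1, f => mulList (f 0) (List.ofFn fun i : Fin n => f i.succ)

/-- `R ^ n = 0`: every product of `n` elements of `R` vanishes. -/
def PowZero (R : Type*) [Mul R] [Zero R] (n : ℕ) : Prop :=
  ∀ (a : R) (l : List R), l.length + 1 = n → mulList a l = 0

/-- `T ^ n = 0` for a subset `T` of a ring. -/
def PowZeroOn {R : Type*} [Mul R] [Zero R] (T : Set R) (n : ℕ) : Prop :=
  ∀ (a : R) (l : List R), a ∈ T → (∀ x ∈ l, x ∈ T) → l.length + 1 = n → mulList a l = 0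

/-- `a` is nilpotent: `aⁿ = 0` for some `n ≥ 1`. -/
def IsNilE {R : Type*} [Mul R] [Zero R] (a : R) : Prop := ∃ n, 1 ≤ n ∧ pw a n = 0

/-- A nil ring: every element is nilpotent. -/
def IsNilRing (R : Type*) [Mul R] [Zero R] : Prop := ∀ a : R, IsNilE a

/-- An `S`-grading of the ring `R`: a direct sum decomposition into additive
subgroups with `R_g R_h ⊆ R_{gh}`. -/
structure IsGrading {S R : Type*} [Monoid S] [NonUnitalRing R] [DecidableEq S]
    (A : S → AddSubgroup R) : Prop where
  mul_mem : ∀ {g h : S} {x y : R}, x ∈ A g → y ∈ A h → x * y ∈ A (g * h)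
  isInternal : DirectSum.IsInternal A

/-- Grading by an additively written monoid. -/
structure IsAddGrading {S R : Type*} [AddMonoid S] [NonUnitalRing R] [DecidableEq S]
    (A : S → AddSubgroup R) : Prop where
  mul_mem : ∀ {g h : S} {x y : R}, x ∈ A g → y ∈ A h → x * y ∈ A (g + h)
  isInternal : DirectSum.IsInternal A

/-- The subset `T` of a ring is `f`-commutative: there are a semigroup `G` acting on it
from the left and a map `f` with `a*b = f(a,b)·(b*a)`. -/
def IsFCommutativeOn {R : Type*} [Mul R] (T : Set R) : Prop :=
  ∃ (G : Type) (_ : Semigroup G) (act : G → R → R),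
    (∀ l m : G, ∀ x : R, x ∈ T → act (l * m) x = act l (act m x)) ∧
    (∀ l : G, ∀ x : R, x ∈ T → act l x ∈ T) ∧
    (∀ l : G, ∀ x y : R, x ∈ T → y ∈ T → act l (x * y) = act l x * y) ∧
    ∃ f : R → R → G, ∀ a b : R, a ∈ T → b ∈ T → a * b = act (f a b) (b * a)

/-- The ring `R` is `f`-commutative. -/
def IsFCommutative (R : Type*) [Mul R] : Prop :=
  ∃ (G : Type) (_ : Semigroup G) (act : G → R → R),
    (∀ l m : G, ∀ x : R, act (l * m) x = act l (act m x)) ∧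
    (∀ l : G, ∀ x y : R, act l (x * y) = act l x * y) ∧
    ∃ f : R → R → G, ∀ a b : R, a * b = act (f a b) (b * a)

/-- The order of `g`: least `n ≥ 1` with `gⁿ = 1`, and `0` if no such `n` exists. -/
noncomputable def ordOf {S : Type*} [Monoid S] (g : S) : ℕ := sInf {n | 1 ≤ n ∧ g ^ n = 1}

/-!
If a product of `d + 1` elements of `R_g` were nonzero, then so would be each of its
prefixes, the prefix of length `k` lying in `R_{g^k}`; hence `g, g², …, g^{d+1}` all lie in
the support, which has only `d` elements. A repetition `g^i = g^j` with `i < j` gives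
`g^{j-i} = 1` by left cancellation, putting the neutral element in the support.
-/

theorem one_mem_of_forall_pow_mem {S : Type*} [Monoid S] [IsLeftCancelMul S] {s : Finset S}
    {g : S} {n : ℕ} (hcard : s.card < n)
    (hpow : ∀ k, 1 ≤ k → k ≤ n → g ^ k ∈ s) : 1 ∈ s := by
  obtain ⟨i, hi, j, hj, hij, hgij⟩ := Finset.exists_ne_map_eq_of_card_lt_of_maps_to
    (s := Finset.range n) (f := fun k => g ^ (k + 1)) (by simpa using hcard)
    (fun k hk => hpow (k + 1) (by omega) (Finset.mem_range.mp hk))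
  rw [Finset.mem_range] at hi hj
  wlog hlt : i < j generalizing i j
  · exact this j hj i hi hij.symm hgij.symm (by omega)
  have hcancel : g ^ (i + 1) * g ^ (j - i) = g ^ (i + 1) * 1 := by
    rw [mul_one, ← pow_add, show i + 1 + (j - i) = j + 1 by omega]
    exact hgij.symm
  rw [← mul_left_cancel hcancel]
  exact hpow (j - i) (by omega) (by omega)

theorem mulList_zero {R : Type*} [MulZeroClass R] (l : List R) : mulList (0 : R) l = 0 := by
  induction l with
  | nil => rfl
  | cons x xs ih => simpa only [mulList, List.foldl_cons, zero_mul] using ih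

theorem mulList_append {R : Type*} [Mul R] (a : R) (l₁ l₂ : List R) :
    mulList a (l₁ ++ l₂) = mulList (mulList a l₁) l₂ :=
  List.foldl_append

theorem mulList_take_ne_zero {R : Type*} [MulZeroClass R] {a : R} {l : List R}
    (h : mulList a l ≠ 0) (k : ℕ) : mulList a (l.take k) ≠ 0 := by
  intro hk
  apply h
  rw [← List.take_append_drop k l, mulList_append, hk, mulList_zero]

section Grading

variable {S R : Type*} [Monoid S] [DecidableEq S] [NonUnitalRing R] {A : S → AddSubgroup R}

theorem IsGrading.mulList_mem_pow (hA : IsGrading A) {g : S} {l : List R}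
    (hl : ∀ x ∈ l, x ∈ A g) {a : R} {n : ℕ} (ha : a ∈ A (g ^ n)) :
    mulList a l ∈ A (g ^ (n + l.length)) := by
  induction l generalizing a n with
  | nil => exact ha
  | cons x xs ih =>
    have hax : a * x ∈ A (g ^ (n + 1)) :=
      pow_succ g n ▸ hA.mul_mem ha (hl x List.mem_cons_self)
    simpa only [List.length_cons, mulList, List.foldl_cons, Nat.add_right_comm, Nat.add_assoc]
      using ih (fun y hy => hl y (List.mem_cons_of_mem x hy)) hax

theorem IsGrading.pow_ne_bot_of_mulList_ne_zero (hA : IsGrading A) {g : S} {a : R}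
    {l : List R} (ha : a ∈ A g) (hl : ∀ x ∈ l, x ∈ A g) (hne : mulList a l ≠ 0)
    {k : ℕ} (hk₁ : 1 ≤ k) (hk₂ : k ≤ l.length + 1) : A (g ^ k) ≠ ⊥ := by
  have hmem := hA.mulList_mem_pow (l := l.take (k - 1))
    (fun x hx => hl x (List.mem_of_mem_take hx)) (n := 1) (by rwa [pow_one])
  rw [List.length_take, min_eq_left (by omega), show 1 + (k - 1) = k by omega] at hmem
  intro hbot
  rw [hbot, AddSubgroup.mem_bot] at hmem
  exact mulList_take_ne_zero hne _ hmem

end Grading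

theorem stmt_19 {S R : Type*} [Monoid S] [IsLeftCancelMul S] [DecidableEq S]
    [NonUnitalRing R] (A : S → AddSubgroup R) (hA : IsGrading A)
    (d : ℕ) (hfin : {g : S | A g ≠ ⊥}.Finite) (hcard : hfin.toFinset.card = d)
    (he : A 1 = ⊥) :
    ∀ g : S, A g ≠ ⊥ → PowZeroOn (A g : Set R) (d + 1) := by
  intro g _ a l ha hl hlen
  by_contra hne
  have hone : (1 : S) ∈ hfin.toFinset :=
    one_mem_of_forall_pow_mem (n := d + 1) (g := g) (by omega) fun k hk₁ hk₂ =>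
      hfin.mem_toFinset.mpr (hA.pow_ne_bot_of_mulList_ne_zero ha hl hne hk₁ (by omega))
  exact hfin.mem_toFinset.mp hone he
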